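/- arXiv:1411.6332 — 2 statements merged into one kernel-verified Lean document; each statement's English description precedes it below -/
import Mathlib

section
/- For any ε ∈ (0,1) there exists a positive constant C_ε such that for all t ≥ 0: |U^r(t,x) − u₊| ≤ C_ε (1+t)^{−1+ε} e^{−ε|x−λ₊t|} whenever x ≥ λ₊ t, and |U^r(t,x) − u₋| ≤ C_ε (1+t)^{−1+ε} e^{−ε|x−λ₋t|} whenever x ≤ λ₋ t. -/
open Real MeasureTheory Filter Set

/-- The smooth monotone initial datum `w₀(x) = (w₋+w₊)/2 + ((w₊−w₋)/2)·tanh x`. -/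
noncomputable def w0 (wm wp x : ℝ) : ℝ := (wm + wp) / 2 + ((wp - wm) / 2) * Real.tanh x

/-!
The profile `w` is transported along the characteristics `x = y + t w₀(y)`. To the right of
`λ₊ t` the foot `y` of the characteristic satisfies `y - (x - λ₊ t) = t (λ₊ - w₀(y)) ≍ t e^{-2y}`,
so `(1+t) e^{-2y} ≲ 1 + y`, whence `e^{-2y} (1+t)^{1-ε} ≲ (1 + y) e^{-2εy} ≲ e^{-εy}`: part of the
spatial decay `λ₊ - w₀(y) ≍ e^{-2y}` is traded for time decay. Since `f'' ≥ c > 0` on `[u₋, u₊]`,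
the inverse of `f'` is Lipschitz there with constant `1/c`, so `U^r` inherits the bound. The left
tail is the mirror image under `x ↦ -x`.
-/

lemma one_sub_tanh_eq (y : ℝ) : 1 - tanh y = 2 / (exp (2 * y) + 1) := by
  have h2 : exp (2 * y) = exp y * exp y := by rw [← exp_add, two_mul]
  rw [tanh_eq, exp_neg, h2]
  have := exp_pos y
  field_simp
  ring

lemma exp_neg_two_mul_le_one_sub_tanh {y : ℝ} (hy : 0 ≤ y) : exp (-(2 * y)) ≤ 1 - tanh y := by
  have h1 : 1 ≤ exp (2 * y) := one_le_exp (by linarith)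
  rw [one_sub_tanh_eq, exp_neg, inv_eq_one_div, div_le_div_iff₀ (exp_pos _) (by positivity)]
  linarith

lemma one_sub_tanh_le (y : ℝ) : 1 - tanh y ≤ 2 * exp (-(2 * y)) := by
  rw [one_sub_tanh_eq, exp_neg, ← div_eq_mul_inv]
  exact div_le_div_of_nonneg_left zero_le_two (exp_pos _) (by linarith)

lemma exp_neg_two_mul_le_rpow_mul_exp {a ε t y : ℝ} (ha : 0 < a) (hε : 0 < ε) (hε1 : ε ≤ 1)
    (ht : 0 ≤ t) (hy : 0 ≤ y) (hty : t * a * exp (-(2 * y)) ≤ y) :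
    exp (-(2 * y)) ≤ (1 + 1 / (a * ε)) * (1 + t) ^ (-1 + ε) * exp (-ε * y) := by
  set s := exp (-(2 * y)) * (1 + t)
  have hs : s ≤ 1 + y / a := by
    have : exp (-(2 * y)) ≤ 1 := exp_le_one_iff.mpr (by linarith)
    have : t * exp (-(2 * y)) ≤ y / a := by rw [le_div_iff₀ ha]; linarith
    linarith
  have hs_rpow : s ^ (1 - ε) ≤ 1 + y / a := calc
    s ^ (1 - ε) ≤ (1 + y / a) ^ (1 - ε) := rpow_le_rpow (by positivity) hs (by linarith)
    _ ≤ (1 + y / a) ^ (1 : ℝ) := rpow_le_rpow_of_exponent_le (by simp; positivity) (by linarith)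
    _ = 1 + y / a := rpow_one _
  -- `y e^{-εy} ≤ 1/ε`, from `1 + εy ≤ e^{εy}`
  have hy_exp : (1 + y / a) * exp (-ε * y) ≤ 1 + 1 / (a * ε) := by
    have h1 : 1 ≤ exp (ε * y) := one_le_exp (by positivity)
    have h2 : y / a ≤ exp (ε * y) / (a * ε) := by
      rw [div_le_div_iff₀ ha (by positivity)]
      nlinarith [add_one_le_exp (ε * y)]
    rw [neg_mul, exp_neg, ← div_eq_mul_inv, div_le_iff₀ (exp_pos _), add_mul, one_mul,
      div_mul_eq_mul_div, one_mul]
    linarith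
  have h1t : 0 < 1 + t := by linarith
  have hsplit : exp (-(2 * y)) * (1 + t) ^ (1 - ε)
      = s ^ (1 - ε) * exp (-ε * y) * exp (-ε * y) := by
    rw [mul_rpow (exp_pos _).le h1t.le, ← exp_mul,
      show exp (-(2 * y)) = exp (-(2 * y) * (1 - ε)) * exp (-ε * y) * exp (-ε * y) by
        rw [← exp_add, ← exp_add]; ring_nf]
    ring
  have hneg : (1 + t) ^ (-1 + ε) = ((1 + t) ^ (1 - ε))⁻¹ := by
    rw [← rpow_neg h1t.le, neg_sub, sub_eq_neg_add]
  rw [hneg, mul_right_comm, ← div_eq_mul_inv, le_div_iff₀ (rpow_pos_of_pos h1t _), hsplit]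
  calc s ^ (1 - ε) * exp (-ε * y) * exp (-ε * y)
      ≤ (1 + y / a) * exp (-ε * y) * exp (-ε * y) := by gcongr
    _ ≤ (1 + 1 / (a * ε)) * exp (-ε * y) := by gcongr

lemma sub_w0_eq (wm wp y : ℝ) : wp - w0 wm wp y = (wp - wm) / 2 * (1 - tanh y) := by
  unfold w0; ring

lemma w0_neg (wm wp y : ℝ) : w0 (-wp) (-wm) (-y) = -w0 wm wp y := by
  unfold w0; rw [tanh_neg]; ring

lemma w0_mem_Icc {wm wp : ℝ} (hw : wm ≤ wp) (y : ℝ) : w0 wm wp y ∈ Icc wm wp := by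
  have h1 := neg_one_lt_tanh y
  have h2 := tanh_lt_one y
  constructor <;> unfold w0 <;> nlinarith

lemma sub_w0_le_of_characteristic {wm wp ε t x y : ℝ} (hw : wm < wp) (hε : 0 < ε)
    (hε1 : ε ≤ 1) (ht : 0 ≤ t) (hchar : y + t * w0 wm wp y = x) (hx : wp * t ≤ x) :
    wp - w0 wm wp y ≤ (wp - wm + 2 / ε) * (1 + t) ^ (-1 + ε) * exp (-ε * |x - wp * t|) := by
  set a := (wp - wm) / 2
  have ha : 0 < a := by simp only [a]; linarith
  have hw0 : 0 ≤ wp - w0 wm wp y := sub_nonneg.2 (w0_mem_Icc hw.le y).2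
  have hzy : x - wp * t ≤ y := by nlinarith [mul_nonneg ht hw0]
  have hy : 0 ≤ y := by linarith
  have hty : t * a * exp (-(2 * y)) ≤ y := calc
    t * a * exp (-(2 * y)) ≤ t * (a * (1 - tanh y)) := by
      rw [mul_assoc]; gcongr; exact exp_neg_two_mul_le_one_sub_tanh hy
    _ = y - (x - wp * t) := by rw [← sub_w0_eq]; linarith
    _ ≤ y := by linarith
  rw [abs_of_nonneg (by linarith), sub_w0_eq]
  calc a * (1 - tanh y) ≤ a * (2 * exp (-(2 * y))) := by gcongr; exact one_sub_tanh_le y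
    _ ≤ a * (2 * ((1 + 1 / (a * ε)) * (1 + t) ^ (-1 + ε) * exp (-ε * y))) := by
      gcongr; exact exp_neg_two_mul_le_rpow_mul_exp ha hε hε1 ht hy hty
    _ ≤ a * (2 * ((1 + 1 / (a * ε)) * (1 + t) ^ (-1 + ε) * exp (-ε * (x - wp * t)))) := by
      gcongr _ * (_ * (_ * exp ?_)); nlinarith
    _ = (wp - wm + 2 / ε) * (1 + t) ^ (-1 + ε) * exp (-ε * (x - wp * t)) := by
      have : wp - wm ≠ 0 := (sub_pos.2 hw).ne'
      simp only [a]; field_simp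

lemma w0_sub_le_of_characteristic {wm wp ε t x y : ℝ} (hw : wm < wp) (hε : 0 < ε)
    (hε1 : ε ≤ 1) (ht : 0 ≤ t) (hchar : y + t * w0 wm wp y = x) (hx : x ≤ wm * t) :
    w0 wm wp y - wm ≤ (wp - wm + 2 / ε) * (1 + t) ^ (-1 + ε) * exp (-ε * |x - wm * t|) := by
  have h := sub_w0_le_of_characteristic (neg_lt_neg hw) hε hε1 ht (x := -x) (y := -y)
    (by rw [w0_neg]; linarith) (by linarith)
  rw [w0_neg, show -x - -wm * t = -(x - wm * t) by ring, abs_neg] at h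
  linarith

lemma exists_pos_mul_sub_le_sub_of_deriv_pos {g : ℝ → ℝ} {a b : ℝ} (hg : ContDiff ℝ 1 g)
    (hpos : ∀ u ∈ Icc a b, 0 < deriv g u) :
    ∃ c > 0, ∀ x ∈ Icc a b, ∀ y ∈ Icc a b, x ≤ y → c * (y - x) ≤ g y - g x := by
  rcases (Icc a b).eq_empty_or_nonempty with hempty | hne
  · exact ⟨1, one_pos, by simp [hempty]⟩
  have hdg : Differentiable ℝ g := hg.differentiable one_ne_zero
  obtain ⟨ξ, hξ, hξmin⟩ :=
    isCompact_Icc.exists_isMinOn hne (hg.continuous_deriv le_rfl).continuousOn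
  exact ⟨deriv g ξ, hpos ξ hξ, (convex_Icc a b).mul_sub_le_image_sub_of_le_deriv
    hdg.continuous.continuousOn hdg.differentiableOn fun v hv => hξmin (interior_subset hv)⟩

theorem stmt_6 (um up : ℝ) (hu : um < up)
    (f : ℝ → ℝ) (hf : ContDiff ℝ 3 f)
    (hconv : ∀ u ∈ Set.Icc um up, 0 < deriv (deriv f) u)
    (linv : ℝ → ℝ) (hlinv : ∀ u ∈ Set.Icc um up, linv (deriv f u) = u)
    (Y : ℝ → ℝ → ℝ)
    (hY : ∀ t x : ℝ, 0 ≤ t → Y t x + t * w0 (deriv f um) (deriv f up) (Y t x) = x) :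
    let Ur : ℝ → ℝ → ℝ := fun t x => linv (w0 (deriv f um) (deriv f up) (Y t x))
    ∀ ε : ℝ, 0 < ε → ε < 1 → ∃ C : ℝ, 0 < C ∧ ∀ t : ℝ, 0 ≤ t → ∀ x : ℝ,
      (deriv f up * t ≤ x →
        |Ur t x - up| ≤ C * (1 + t) ^ (-1 + ε) * Real.exp (-ε * |x - deriv f up * t|)) ∧
      (x ≤ deriv f um * t →
        |Ur t x - um| ≤ C * (1 + t) ^ (-1 + ε) * Real.exp (-ε * |x - deriv f um * t|)) := by
  intro Ur ε hε hε1
  have hf' : ContDiff ℝ 1 (deriv f) := (hf.deriv' (n := 2)).of_le (by norm_num)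
  obtain ⟨c, hc, hgrow⟩ := exists_pos_mul_sub_le_sub_of_deriv_pos hf' hconv
  have hspeed : deriv f um < deriv f up := by
    nlinarith [hgrow um (left_mem_Icc.2 hu.le) up (right_mem_Icc.2 hu.le) hu.le]
  refine ⟨(deriv f up - deriv f um + 2 / ε) / c, div_pos (by positivity) hc, fun t ht x => ?_⟩
  obtain ⟨u, hu_mem, hfu⟩ := intermediate_value_Icc hu.le hf'.continuous.continuousOn
    (w0_mem_Icc hspeed.le (Y t x))
  have hUr : Ur t x = u := by simp only [Ur]; rw [← hfu, hlinv u hu_mem]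
  rw [hUr]
  constructor
  · intro hx
    have hw := sub_w0_le_of_characteristic hspeed hε hε1.le ht (hY t x ht) hx
    have hg := hgrow u hu_mem up (right_mem_Icc.2 hu.le) hu_mem.2
    rw [abs_sub_comm, abs_of_nonneg (sub_nonneg.2 hu_mem.2), div_mul_eq_mul_div,
      div_mul_eq_mul_div, le_div_iff₀ hc]
    linarith
  · intro hx
    have hw := w0_sub_le_of_characteristic hspeed hε hε1.le ht (hY t x ht) hx
    have hg := hgrow um (left_mem_Icc.2 hu.le) u hu_mem hu_mem.1
    rw [abs_of_nonneg (sub_nonneg.2 hu_mem.1), div_mul_eq_mul_div, div_mul_eq_mul_div,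
      le_div_iff₀ hc]
    linarith
end

section
/- There exists a positive constant C (depending only on p, A, B) such that ‖∂_x((∂_x U)^p)(t,·)‖_{L²(ℝ)} = C·t^{−(2p+1)/(2(p+1))} for all t > 0, where (∂_x U)^p(t,·) is continuously differentiable in x and its derivative ∂_x((∂_x U)^p) is the integrand of the L² norm. -/
/-!
With `s = t^{-1/(p+1)}` and `q = p/(p-1)` one has `v(t,x)^p = s^p h(s x)` for the fixed profile
`h(y) = (A - B y²)₊^q`. Since `q > 1`, `h` is `C¹` with compact support, and it is not identically
zero, so `h'` is a nonzero element of `L²`. The chain rule and the substitution `y = s x` give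
`‖∂ₓ(v^p)(t,·)‖₂ = s^{p+1} s^{-1/2} ‖h'‖₂ = t^{-(2p+1)/(2(p+1))} ‖h'‖₂`.
-/

open Real MeasureTheory Filter Set

/-- The Barenblatt-type profile `v(t,x) = t^{-1/(p+1)} (max(A - B(x t^{-1/(p+1)})², 0))^{1/(p-1)}`,
the spatial derivative of the contact wave for `p`-Laplacian type viscosity. -/
noncomputable def vfun (p A B t x : ℝ) : ℝ :=
  t ^ (-(1:ℝ)/(p+1)) * (max (A - B * (x * t ^ (-(1:ℝ)/(p+1)))^2) 0) ^ ((1:ℝ)/(p-1))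

/-- The contact wave for `p`-Laplacian type viscosity,
`U(t,x) = u₋ + ∫_{-∞}^x t^{-1/(p+1)} (max(A - B(y t^{-1/(p+1)})², 0))^{1/(p-1)} dy`. -/
noncomputable def Ucw (p A B um t x : ℝ) : ℝ :=
  um + ∫ y in Set.Iio x, vfun p A B t y

open Topology ENNReal

lemma hasDerivAt_max_zero_rpow {q : ℝ} (hq : 1 < q) (x : ℝ) :
    HasDerivAt (fun x : ℝ => max x 0 ^ q) (q * max x 0 ^ (q - 1)) x := by
  have hq0 : q ≠ 0 := by linarith
  have hq1 : q - 1 ≠ 0 := by linarith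
  rcases lt_trichotomy x 0 with hx | rfl | hx
  · have hzero : (fun x : ℝ => max x 0 ^ q) =ᶠ[𝓝 x] fun _ => 0 := by
      filter_upwards [eventually_lt_nhds hx] with y hy
      simp [max_eq_right hy.le, zero_rpow hq0]
    rw [max_eq_right hx.le, zero_rpow hq1, mul_zero]
    exact (hasDerivAt_const x 0).congr_of_eventuallyEq hzero
  · -- at the kink both one-sided derivatives vanish because `q > 1`
    rw [max_self, zero_rpow hq1, mul_zero]
    have hright : HasDerivWithinAt (fun x : ℝ => max x 0 ^ q) 0 (Ici 0) 0 := by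
      have hpow := (hasDerivAt_rpow_const (x := 0) (Or.inr hq.le)).hasDerivWithinAt (s := Ici 0)
      rw [zero_rpow hq1, mul_zero] at hpow
      exact hpow.congr (fun y hy => by simp only [max_eq_left (mem_Ici.1 hy)])
        (by simp only [max_self])
    have hleft : HasDerivWithinAt (fun x : ℝ => max x 0 ^ q) 0 (Iic 0) 0 :=
      (hasDerivWithinAt_const 0 (Iic 0) (0 : ℝ)).congr
        (fun y hy => by simp only [max_eq_right (mem_Iic.1 hy), zero_rpow hq0])
        (by simp only [max_self, zero_rpow hq0])
    simpa using hleft.union hright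
  · have hpow : (fun x : ℝ => max x 0 ^ q) =ᶠ[𝓝 x] fun x => x ^ q := by
      filter_upwards [eventually_gt_nhds hx] with y hy
      rw [max_eq_left hy.le]
    rw [max_eq_left hx.le]
    exact (hasDerivAt_rpow_const (Or.inl hx.ne')).congr_of_eventuallyEq hpow

lemma contDiff_max_zero_rpow {q : ℝ} (hq : 1 < q) : ContDiff ℝ 1 (fun x : ℝ => max x 0 ^ q) := by
  rw [contDiff_one_iff_deriv]
  refine ⟨fun x => (hasDerivAt_max_zero_rpow hq x).differentiableAt, ?_⟩
  rw [funext fun x => (hasDerivAt_max_zero_rpow hq x).deriv]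
  exact continuous_const.mul
    ((continuous_id.max continuous_const).rpow_const fun _ => Or.inr (by linarith))

theorem eLpNorm_comp_mul_left {E : Type*} [NormedAddCommGroup E] (g : ℝ → E) (p : ℝ≥0∞)
    {s : ℝ} (hs : s ≠ 0) :
    eLpNorm (fun x => g (s * x)) p volume =
      ENNReal.ofReal |s⁻¹| ^ (1 / p).toReal * eLpNorm g p volume := by
  rw [← Function.comp_def, ← (measurableEmbedding_mulLeft₀ hs).eLpNorm_map_measure,
    Real.map_volume_mul_left hs, eLpNorm_smul_measure_of_ne_zero (by simp [hs]), smul_eq_mul]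

theorem eLpNorm_deriv_const_mul_comp_mul_left (h : ℝ → ℝ) (p : ℝ≥0∞) {c s : ℝ} (hc : 0 ≤ c)
    (hs : 0 < s) :
    eLpNorm (deriv fun x => c * h (s * x)) p volume =
      ENNReal.ofReal (c * s * s ^ (-(1 / p).toReal)) * eLpNorm (deriv h) p volume := by
  have hderiv : (deriv fun x => c * h (s * x)) = (c * s) • fun x => deriv h (s * x) := by
    funext x
    simp only [deriv_const_mul_field', deriv_comp_mul_left, Pi.smul_apply, smul_eq_mul, mul_assoc]
  rw [hderiv, eLpNorm_const_smul, eLpNorm_comp_mul_left _ _ hs.ne', ← mul_assoc,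
    enorm_of_nonneg (by positivity), abs_of_pos (inv_pos.2 hs),
    ofReal_rpow_of_nonneg (inv_pos.2 hs).le toReal_nonneg, ← ofReal_mul (by positivity),
    inv_rpow hs.le, rpow_neg hs.le]

theorem eLpNorm_deriv_ne_zero {h : ℝ → ℝ} (hh : ContDiff ℝ 1 h) (hc : HasCompactSupport h)
    (hne : h ≠ 0) {p : ℝ≥0∞} (hp : p ≠ 0) : eLpNorm (deriv h) p volume ≠ 0 := by
  have hcont : Continuous (deriv h) := hh.continuous_deriv le_rfl
  intro h0
  rw [eLpNorm_eq_zero_iff hcont.aestronglyMeasurable hp] at h0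
  have hderiv : deriv h = 0 := (hcont.ae_eq_iff_eq volume continuous_zero).1 h0
  obtain ⟨x₀, hx₀⟩ := nonempty_compl.2 hc.isCompact.ne_univ
  refine hne (funext fun x => ?_)
  rw [is_const_of_deriv_eq_zero (hh.differentiable one_ne_zero) (congrFun hderiv) x x₀]
  exact image_eq_zero_of_notMem_tsupport hx₀

noncomputable def barenblattProfile (A B q y : ℝ) : ℝ := max (A - B * y ^ 2) 0 ^ q

lemma contDiff_barenblattProfile (A B : ℝ) {q : ℝ} (hq : 1 < q) :
    ContDiff ℝ 1 (barenblattProfile A B q) :=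
  (contDiff_max_zero_rpow hq).comp (by fun_prop)

lemma hasCompactSupport_barenblattProfile (A : ℝ) {B q : ℝ} (hB : 0 < B) (hq : q ≠ 0) :
    HasCompactSupport (barenblattProfile A B q) := by
  refine HasCompactSupport.intro (isCompact_Icc (a := -√(A / B)) (b := √(A / B))) fun y hy => ?_
  have hy' : √(A / B) < |y| := by
    rw [mem_Icc, not_and_or, not_le, not_le] at hy
    rcases hy with hy | hy
    · exact lt_abs.2 (Or.inr (by linarith))
    · exact lt_abs.2 (Or.inl hy)
  have hneg : A - B * y ^ 2 ≤ 0 := by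
    have := (sqrt_lt' ((sqrt_nonneg _).trans_lt hy')).1 hy'
    rw [sq_abs, div_lt_iff₀ hB] at this
    linarith
  simp only [barenblattProfile, max_eq_right hneg, zero_rpow hq]

lemma barenblattProfile_ne_zero {A : ℝ} (B q : ℝ) (hA : 0 < A) : barenblattProfile A B q ≠ 0 :=
  fun h => by
    have h0 : barenblattProfile A B q 0 = 0 := congrFun h 0
    norm_num [barenblattProfile, max_eq_left hA.le] at h0
    exact (rpow_pos_of_pos hA q).ne' h0

lemma vfun_rpow_eq {p A B t : ℝ} (hp : 1 < p) (ht : 0 < t) :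
    (fun x => vfun p A B t x ^ p) = fun x => (t ^ (-(1:ℝ) / (p + 1))) ^ p *
      barenblattProfile A B (p / (p - 1)) (t ^ (-(1:ℝ) / (p + 1)) * x) := by
  funext x
  rw [vfun, mul_rpow (rpow_nonneg ht.le _) (rpow_nonneg (le_max_right _ 0) _),
    ← rpow_mul (le_max_right _ 0), mul_comm x, barenblattProfile]
  congr 2
  field_simp

theorem stmt_13_general (p μ A B : ℝ)
    (hp : 1 < p) (hμ : 0 < μ)
    (hB : B = (p - 1) / (2 * μ * p * (p + 1))) (hA : 0 < A) :
    (∀ t : ℝ, 0 < t → ContDiff ℝ 1 (fun x => vfun p A B t x ^ p)) ∧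
    (∃ C : ℝ, 0 < C ∧ ∀ t : ℝ, 0 < t →
      eLpNorm (fun x => deriv (fun y => vfun p A B t y ^ p) x) 2 volume
        = ENNReal.ofReal (C * t ^ (-(2 * p + 1) / (2 * (p + 1))))) := by
  have hB0 : 0 < B := hB ▸ div_pos (by linarith) (by positivity)
  have hq : 1 < p / (p - 1) := by rw [lt_div_iff₀ (by linarith)]; linarith
  set h := barenblattProfile A B (p / (p - 1))
  have hh : ContDiff ℝ 1 h := contDiff_barenblattProfile A B hq
  have hsupp : HasCompactSupport h := hasCompactSupport_barenblattProfile A hB0 (by linarith)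
  have hfin : eLpNorm (deriv h) 2 volume ≠ ⊤ :=
    ((hh.continuous_deriv le_rfl).memLp_of_hasCompactSupport hsupp.deriv).eLpNorm_ne_top
  have hpos : eLpNorm (deriv h) 2 volume ≠ 0 :=
    eLpNorm_deriv_ne_zero hh hsupp (barenblattProfile_ne_zero B _ hA) two_ne_zero
  refine ⟨fun t ht => ?_, (eLpNorm (deriv h) 2 volume).toReal, toReal_pos hpos hfin,
    fun t ht => ?_⟩
  · rw [vfun_rpow_eq hp ht]
    exact contDiff_const.mul (hh.comp (contDiff_const.mul contDiff_id))
  · set s := t ^ (-(1:ℝ) / (p + 1)) with hs_def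
    have hs : 0 < s := rpow_pos_of_pos ht _
    have hexp : s ^ p * s * s ^ (-(1 / (2 : ℝ≥0∞)).toReal) =
        t ^ (-(2 * p + 1) / (2 * (p + 1))) := by
      rw [show (1 / (2 : ℝ≥0∞)).toReal = 1 / 2 by norm_num, hs_def, ← rpow_mul ht.le,
        ← rpow_mul ht.le, ← rpow_add ht, ← rpow_add ht]
      congr 1
      field_simp
      ring
    rw [vfun_rpow_eq hp ht, eLpNorm_deriv_const_mul_comp_mul_left h 2 (by positivity) hs, hexp,
      ofReal_mul toReal_nonneg, ofReal_toReal hfin, mul_comm]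

theorem stmt_13 (p μ um up A B : ℝ)
    (hp : 1 < p) (hμ : 0 < μ) (hu : um < up)
    (hB : B = (p - 1) / (2 * μ * p * (p + 1))) (hA : 0 < A)
    (hnorm : 2 * A ^ ((p+1)/(2*(p-1))) * B ^ (-(1:ℝ)/2) *
      (∫ θ in (0:ℝ)..(Real.pi/2), Real.sin θ ^ ((p+1)/(p-1))) = up - um) :
    (∀ t : ℝ, 0 < t → ContDiff ℝ 1 (fun x => vfun p A B t x ^ p)) ∧
    (∃ C : ℝ, 0 < C ∧ ∀ t : ℝ, 0 < t →
      eLpNorm (fun x => deriv (fun y => vfun p A B t y ^ p) x) 2 volume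
        = ENNReal.ofReal (C * t ^ (-(2 * p + 1) / (2 * (p + 1))))) :=
  stmt_13_general p μ A B hp hμ hB hA
end
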